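/- Let c ∈ F_q^n be nonzero with b-shape (N_0, N_1, ..., N_{l+1}), with n_i = |N_i| and t = n_0 + n_{l+1}. If t ≤ b-2 and l ≥ 3 (l odd), then wt_b(c) = t + Σ_{i=1}^{(l+1)/2} n_{2i-1} + (l-1)(b-1)/2. -/

import Mathlib

/-- The cyclic `b`-weight of `x : ZMod n → F`. -/
noncomputable def wtb {F : Type*} [Zero F] {n : ℕ} (b : ℕ) (x : ZMod n → F) : ℕ :=
  Nat.card {i : ZMod n // ∃ j < b, x (i + (j : ZMod n)) ≠ 0}

/-- Partial sums of block sizes: `blockSum nsize i = n_0 + ⋯ + n_{i-1}`. -/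
def blockSum (nsize : ℕ → ℕ) (i : ℕ) : ℕ := ∑ j ∈ Finset.range i, nsize j

/-- `c` has `b`-shape `(N_0, N_1, …, N_{l+1})`, where block `N_i` consists of the
(0-indexed) positions `[S i, S (i+1))` with `S = blockSum nsize`:
* the block sizes sum to `n`, and the internal blocks are nonempty;
* all coordinates of `c` in the leading block `N_0` and the trailing block
  `N_{l+1}` are zero;
* each odd-indexed block `N_i` (`1 ≤ i ≤ l`) starts and ends with a nonzero
  coordinate and its non-cyclic `(b-1)`-weight equals its length `n_i`, i.e.
  every position in the block has a nonzero coordinate within its window of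
  length `b-1` truncated at the end of the block;
* each even-indexed block `N_i` (`1 ≤ i ≤ l`) is a zero run of length `≥ b-1`. -/
def HasBShape {F : Type*} [Zero F] {n : ℕ} (b l : ℕ) (nsize : ℕ → ℕ)
    (c : ZMod n → F) : Prop :=
  blockSum nsize (l + 2) = n ∧
  (∀ i, 1 ≤ i → i ≤ l → 1 ≤ nsize i) ∧
  (∀ p, p < nsize 0 → c (p : ZMod n) = 0) ∧
  (∀ p, blockSum nsize (l + 1) ≤ p → p < n → c (p : ZMod n) = 0) ∧
  (∀ i, 1 ≤ i → i ≤ l → Odd i →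
    c ((blockSum nsize i : ℕ) : ZMod n) ≠ 0 ∧
    c ((blockSum nsize (i + 1) - 1 : ℕ) : ZMod n) ≠ 0 ∧
    (∀ p, blockSum nsize i ≤ p → p < blockSum nsize (i + 1) →
      ∃ j < b - 1, p + j < blockSum nsize (i + 1) ∧ c ((p + j : ℕ) : ZMod n) ≠ 0)) ∧
  (∀ i, 1 ≤ i → i ≤ l → Even i →
    b - 1 ≤ nsize i ∧
    ∀ p, blockSum nsize i ≤ p → p < blockSum nsize (i + 1) → c ((p : ℕ) : ZMod n) = 0)

/-!
A position `p` sees no nonzero coordinate in its cyclic window `p, …, p + b - 1` exactly when the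
whole window lies inside one of the internal zero blocks `N_{2k+2}`. Every other window meets a
dense block or reaches the first coordinate of the next dense block, which is nonzero; for the
windows starting in `N_{l+1}` or `N_0` this uses `t ≤ b - 2` and wraps around cyclically to the
start of `N_1`. The block `N_{2k+2}` contains `n_{2k+2} - (b - 1)` such positions, so
`wt_b(c) = n - ∑ₖ (n_{2k+2} - (b - 1))`.
-/

open Finset Function

open Classical in
theorem wtb_eq_card_filter {F : Type*} [Zero F] {n : ℕ} [NeZero n] (b : ℕ) (x : ZMod n → F) :
    wtb b x = #{p ∈ range n | ∃ j < b, x ((p + j : ℕ) : ZMod n) ≠ 0} := by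
  rw [wtb, Nat.card_eq_fintype_card, Fintype.card_subtype]
  refine card_nbij' ZMod.val (fun p => (p : ZMod n)) (fun a ha => ?_) (fun p hp => ?_)
    (fun a _ => ZMod.natCast_zmod_val a)
    (fun p hp => ZMod.val_cast_of_lt (mem_range.1 (mem_filter.1 hp).1))
  · simp only [coe_filter, mem_univ, true_and, Set.mem_ofPred_eq, mem_range] at ha ⊢
    simpa only [Nat.cast_add, ZMod.natCast_zmod_val] using ⟨a.val_lt, ha⟩
  · simp only [coe_filter, mem_range, Set.mem_ofPred_eq, mem_univ, true_and] at hp ⊢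
    simpa only [Nat.cast_add] using hp.2

theorem exists_le_lt_succ_of_lt {S : ℕ → ℕ} {p : ℕ} (h0 : S 0 ≤ p) :
    ∀ {M}, p < S M → ∃ i < M, S i ≤ p ∧ p < S (i + 1)
  | 0, hp => absurd h0 (not_le.2 hp)
  | M + 1, hp => by
    by_cases hM : S M ≤ p
    · exact ⟨M, M.lt_succ_self, hM, hp⟩
    · obtain ⟨i, hi, h⟩ := exists_le_lt_succ_of_lt h0 (not_le.1 hM)
      exact ⟨i, hi.trans M.lt_succ_self, h⟩

theorem blockSum_zero (nsize : ℕ → ℕ) : blockSum nsize 0 = 0 :=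
  sum_range_zero _

theorem blockSum_succ (nsize : ℕ → ℕ) (i : ℕ) :
    blockSum nsize (i + 1) = blockSum nsize i + nsize i :=
  sum_range_succ _ _

theorem blockSum_one (nsize : ℕ → ℕ) : blockSum nsize 1 = nsize 0 :=
  sum_range_one _

theorem blockSum_monotone (nsize : ℕ → ℕ) : Monotone (blockSum nsize) :=
  fun _ _ h => sum_le_sum_of_subset (range_subset_range.2 h)

theorem blockSum_two_mul_add_three (nsize : ℕ → ℕ) (m : ℕ) :
    blockSum nsize (2 * m + 3) = nsize 0 + nsize (2 * m + 2) +
      ∑ k ∈ range (m + 1), nsize (2 * k + 1) + ∑ k ∈ range m, nsize (2 * k + 2) := by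
  induction m with
  | zero => simp [blockSum, sum_range_succ]; ring
  | succ m ih =>
    rw [show 2 * (m + 1) + 3 = 2 * m + 3 + 1 + 1 by ring, blockSum_succ, blockSum_succ, ih,
      sum_range_succ (fun k => nsize (2 * k + 1)) (m + 1),
      sum_range_succ (fun k => nsize (2 * k + 2)) m]
    ring_nf

/-- The positions of the zero block `N_{2k+2}` whose whole `b`-window stays inside the block. -/
def deepZeros (b : ℕ) (nsize : ℕ → ℕ) (k : ℕ) : Finset ℕ :=
  Ico (blockSum nsize (2 * k + 2)) (blockSum nsize (2 * k + 3) - (b - 1))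

theorem card_deepZeros (b : ℕ) (nsize : ℕ → ℕ) (k : ℕ) :
    #(deepZeros b nsize k) = nsize (2 * k + 2) - (b - 1) := by
  rw [deepZeros, Nat.card_Ico, blockSum_succ]
  omega

theorem deepZeros_subset_Ico (b : ℕ) (nsize : ℕ → ℕ) (k : ℕ) :
    deepZeros b nsize k ⊆ Ico (blockSum nsize (2 * k + 2)) (blockSum nsize (2 * k + 3)) :=
  Ico_subset_Ico_right tsub_le_self

theorem pairwise_disjoint_deepZeros (b : ℕ) (nsize : ℕ → ℕ) :
    Pairwise (Disjoint on (deepZeros b nsize)) := by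
  refine (pairwise_disjoint_on _).2 fun k k' hk => disjoint_left.2 fun p hp hp' => ?_
  have hp := mem_Ico.1 (deepZeros_subset_Ico b nsize k hp)
  have hp' := mem_Ico.1 (deepZeros_subset_Ico b nsize k' hp')
  have := blockSum_monotone nsize (show 2 * k + 3 ≤ 2 * k' + 2 by omega)
  omega

theorem card_biUnion_deepZeros (b : ℕ) (nsize : ℕ → ℕ) (m : ℕ) :
    #((range m).biUnion (deepZeros b nsize)) = ∑ k ∈ range m, (nsize (2 * k + 2) - (b - 1)) := by
  rw [card_biUnion ((pairwise_disjoint_deepZeros b nsize).set_pairwise _)]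
  exact sum_congr rfl fun k _ => card_deepZeros b nsize k

namespace HasBShape

variable {F : Type*} [Zero F] {n b l m : ℕ} {nsize : ℕ → ℕ} {c : ZMod n → F}

theorem sub_one_le_nsize (h : HasBShape b l nsize c) {i : ℕ} (hi : 1 ≤ i) (hil : i ≤ l)
    (heven : Even i) : b - 1 ≤ nsize i :=
  (h.2.2.2.2.2 i hi hil heven).1

theorem eq_zero_of_mem_deepZeros (h : HasBShape b l nsize c) {k : ℕ} (hk : 2 * k + 2 ≤ l)
    {p : ℕ} (hp : p ∈ deepZeros b nsize k) {j : ℕ} (hj : j < b) :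
    c ((p + j : ℕ) : ZMod n) = 0 := by
  rw [deepZeros, mem_Ico] at hp
  have hpj : p + j < blockSum nsize (2 * k + 3) := by omega
  exact (h.2.2.2.2.2 (2 * k + 2) (by omega) hk ⟨k + 1, by ring⟩).2 _ (by omega) hpj

theorem exists_ne_zero_of_le_blockSum_lt_add (h : HasBShape b l nsize c) {i : ℕ} (hi : 1 ≤ i)
    (hil : i ≤ l) (hodd : Odd i) {p : ℕ} (hp : p ≤ blockSum nsize i)
    (hpb : blockSum nsize i < p + b) : ∃ j < b, c ((p + j : ℕ) : ZMod n) ≠ 0 :=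
  ⟨blockSum nsize i - p, by omega, by
    rw [Nat.add_sub_cancel' hp]
    exact (h.2.2.2.2.1 i hi hil hodd).1⟩

theorem exists_ne_zero_of_mem_odd_block (h : HasBShape b l nsize c) {i : ℕ} (hi : 1 ≤ i)
    (hil : i ≤ l) (hodd : Odd i) {p : ℕ} (hp : blockSum nsize i ≤ p)
    (hp' : p < blockSum nsize (i + 1)) : ∃ j < b, c ((p + j : ℕ) : ZMod n) ≠ 0 :=
  have ⟨j, hj, _, hne⟩ := (h.2.2.2.2.1 i hi hil hodd).2.2 p hp hp'
  ⟨j, by omega, hne⟩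

theorem exists_ne_zero_of_mem_trailing_block (h : HasBShape b l nsize c) (hl : 1 ≤ l)
    (ht : nsize 0 + nsize (l + 1) ≤ b - 2) {p : ℕ} (hp : blockSum nsize (l + 1) ≤ p)
    (hpn : p < n) : ∃ j < b, c ((p + j : ℕ) : ZMod n) ≠ 0 := by
  have hn : blockSum nsize (l + 1) + nsize (l + 1) = n := by rw [← blockSum_succ]; exact h.1
  refine ⟨n - p + nsize 0, by omega, ?_⟩
  have hwrap : ((p + (n - p + nsize 0) : ℕ) : ZMod n) = ((blockSum nsize 1 : ℕ) : ZMod n) := by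
    rw [blockSum_one, ← Nat.add_assoc, Nat.add_sub_cancel' hpn.le, Nat.cast_add,
      ZMod.natCast_self, zero_add]
  rw [hwrap]
  exact (h.2.2.2.2.1 1 le_rfl hl odd_one).1

theorem exists_ne_zero_of_not_mem_deepZeros (h : HasBShape b l nsize c) (hl : l = 2 * m + 1)
    (ht : nsize 0 + nsize (l + 1) ≤ b - 2) {p : ℕ} (hpn : p < n)
    (hp : p ∉ (range m).biUnion (deepZeros b nsize)) : ∃ j < b, c ((p + j : ℕ) : ZMod n) ≠ 0 := by
  obtain ⟨i, hi, hSi, hSi'⟩ :=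
    exists_le_lt_succ_of_lt (blockSum_zero nsize ▸ p.zero_le) (h.1.symm ▸ hpn : p < _)
  rcases Nat.lt_or_ge i 1 with hi0 | hi1
  · obtain rfl : i = 0 := by omega
    rw [blockSum_one] at hSi'
    exact h.exists_ne_zero_of_le_blockSum_lt_add le_rfl (by omega) odd_one hSi'.le
      (by rw [blockSum_one]; omega)
  rcases Nat.lt_or_ge i (l + 1) with hil | hil
  · rcases Nat.even_or_odd i with ⟨r, rfl⟩ | hodd
    · have hpr : ¬ p + (b - 1) < blockSum nsize (r + r + 1) := fun hlt =>
        hp (mem_biUnion.2 ⟨r - 1, mem_range.2 (by omega), by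
          rw [deepZeros, mem_Ico, show 2 * (r - 1) + 2 = r + r by omega,
            show 2 * (r - 1) + 3 = r + r + 1 by omega]
          omega⟩)
      exact h.exists_ne_zero_of_le_blockSum_lt_add (by omega) (by omega) ⟨r, by ring⟩ hSi'.le (by omega)
    · exact h.exists_ne_zero_of_mem_odd_block hi1 (by omega) hodd hSi hSi'
  · obtain rfl : i = l + 1 := by omega
    exact h.exists_ne_zero_of_mem_trailing_block (by omega) ht hSi hpn

theorem biUnion_deepZeros_subset_range (h : HasBShape b l nsize c) (hl : l = 2 * m + 1) :
    (range m).biUnion (deepZeros b nsize) ⊆ range n := by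
  intro p hp
  obtain ⟨k, hk, hpk⟩ := mem_biUnion.1 hp
  have hpk := mem_Ico.1 (deepZeros_subset_Ico b nsize k hpk)
  have := blockSum_monotone nsize (show 2 * k + 3 ≤ l + 2 by have := mem_range.1 hk; omega)
  exact mem_range.2 (by rw [← h.1]; omega)

open Classical in
theorem wtb_eq (h : HasBShape b l nsize c) [NeZero n] (hl : l = 2 * m + 1)
    (ht : nsize 0 + nsize (l + 1) ≤ b - 2) :
    wtb b c = n - ∑ k ∈ range m, (nsize (2 * k + 2) - (b - 1)) := by
  have hcovered : {p ∈ range n | ∃ j < b, c ((p + j : ℕ) : ZMod n) ≠ 0} =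
      range n \ (range m).biUnion (deepZeros b nsize) := by
    ext p
    simp only [mem_filter, mem_sdiff, mem_range]
    refine ⟨fun ⟨hpn, j, hj, hne⟩ => ⟨hpn, fun hp => ?_⟩,
      fun ⟨hpn, hp⟩ => ⟨hpn, h.exists_ne_zero_of_not_mem_deepZeros hl ht hpn hp⟩⟩
    obtain ⟨k, hk, hpk⟩ := mem_biUnion.1 hp
    exact hne (h.eq_zero_of_mem_deepZeros (by rw [mem_range] at hk; omega) hpk hj)
  rw [wtb_eq_card_filter, hcovered, card_sdiff_of_subset (h.biUnion_deepZeros_subset_range hl),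
    card_range, card_biUnion_deepZeros]

end HasBShape

theorem wtb_of_bshape_case2_general
    {F : Type*} [Field F] {n : ℕ} [NeZero n] (b l : ℕ)
    (nsize : ℕ → ℕ) (c : ZMod n → F)
    (hshape : HasBShape b l nsize c)
    (hlodd : Odd l) (ht : nsize 0 + nsize (l + 1) ≤ b - 2) :
    wtb b c = (nsize 0 + nsize (l + 1)) +
      (∑ i ∈ Finset.range ((l + 1) / 2), nsize (2 * i + 1)) +
      (l - 1) * (b - 1) / 2 := by
  obtain ⟨m, rfl⟩ := hlodd
  have hgaps : ∀ k ∈ range m, b - 1 ≤ nsize (2 * k + 2) := fun k hk =>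
    hshape.sub_one_le_nsize (by omega) (by have := mem_range.1 hk; omega) ⟨k + 1, by ring⟩
  have hgaps_sum : m * (b - 1) ≤ ∑ k ∈ range m, nsize (2 * k + 2) := by
    simpa using sum_le_sum hgaps
  have hn := blockSum_two_mul_add_three nsize m
  rw [hshape.1] at hn
  rw [hshape.wtb_eq rfl ht, sum_tsub_distrib _ hgaps, sum_const, card_range, smul_eq_mul,
    show (2 * m + 1 + 1) / 2 = m + 1 by omega, show 2 * m + 1 + 1 = 2 * m + 2 from rfl,
    show (2 * m + 1 - 1) * (b - 1) / 2 = m * (b - 1) by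
      rw [Nat.add_sub_cancel, mul_assoc, Nat.mul_div_cancel_left _ two_pos]]
  omega

/-- If `t = n_0 + n_{l+1} ≤ b - 2` and `l ≥ 3` is odd, then
`wt_b(c) = t + ∑_{i=1}^{(l+1)/2} n_{2i-1} + (l-1)(b-1)/2`. -/
theorem wtb_of_bshape_case2
    {F : Type*} [Field F] {n : ℕ} [NeZero n] (b l : ℕ) (hb : 2 ≤ b)
    (nsize : ℕ → ℕ) (c : ZMod n → F) (hc : c ≠ 0)
    (hshape : HasBShape b l nsize c)
    (hl : 3 ≤ l) (hlodd : Odd l) (ht : nsize 0 + nsize (l + 1) ≤ b - 2) :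
    wtb b c = (nsize 0 + nsize (l + 1)) +
      (∑ i ∈ Finset.range ((l + 1) / 2), nsize (2 * i + 1)) +
      (l - 1) * (b - 1) / 2 :=
  wtb_of_bshape_case2_general b l nsize c hshape hlodd ht
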